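/- arXiv:2504.08506 — 4 statements merged into one kernel-verified Lean document; each statement's English description precedes it below -/
import Mathlib

section
/- Consequence of the density time-derivative: for an integrable test function f and the Gibbs curve μ_t with differentiable schedule β, one has ∫ f(x) ∂_t π_t(x) dx = −β'(t)·Cov_{μ_t}(f, U), where Cov_{μ_t}(f,U) = ∫ (f − ∫f dμ_t)(U − ∫U dμ_t) dμ_t. -/
/-!
In the tilt parameter `θ = -β(t)`, the Gibbs measure `μₜ` is the exponential tilt of Lebesgue
measure by `θ U`, and its normalising constant is the moment generating function `M` of `U` at `θ`.
Hence `∂ₜ πₜ(x) = -β'(t) (U(x) - M'(θ)/M(θ)) πₜ(x)` with `M'(θ)/M(θ) = E_{μₜ}[U]`, and integrating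
against `f` gives `-β'(t) E_{μₜ}[f (U - E_{μₜ}U)]`, which is the covariance because
`U - E_{μₜ}U` has mean zero. The quadratic growth of `U` makes `exp (θ U)` integrable for every
`θ < 0`, so `θ` lies in the interior of the domain of `M`, where `M` is differentiable under the
integral sign.
-/

open MeasureTheory ProbabilityTheory

namespace ProbabilityTheory

section Covariance

variable {Ω : Type*} {mΩ : MeasurableSpace Ω} {X Y : Ω → ℝ} {μ : Measure Ω}

lemma covariance_eq_integral_mul_sub [IsProbabilityMeasure μ] (hY : Integrable Y μ)
    (hXY : Integrable (fun ω ↦ X ω * (Y ω - μ[Y])) μ) :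
    cov[X, Y; μ] = ∫ ω, X ω * (Y ω - μ[Y]) ∂μ := by
  have hY_centered : Integrable (fun ω ↦ Y ω - μ[Y]) μ := hY.sub (integrable_const _)
  have hY_mean_zero : ∫ ω, (Y ω - μ[Y]) ∂μ = 0 := by
    rw [integral_sub hY (integrable_const _)]
    simp
  simp_rw [covariance, sub_mul]
  rw [integral_sub hXY (hY_centered.const_mul _), integral_const_mul, hY_mean_zero, mul_zero,
    sub_zero]

end Covariance

section Tilted

open Real

variable {Ω : Type*} {mΩ : MeasurableSpace Ω} {X : Ω → ℝ} {μ : Measure Ω} {t : ℝ}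

lemma hasDerivAt_exp_mul_div_mgf [NeZero μ] (ht : t ∈ interior (integrableExpSet X μ)) (ω : Ω) :
    HasDerivAt (fun s ↦ exp (s * X ω) / mgf X μ s)
      ((X ω - (μ.tilted (t * X ·))[X]) * (exp (t * X ω) / mgf X μ t)) t := by
  have hmgf : mgf X μ t ≠ 0 :=
    (mgf_pos' (NeZero.ne μ) (integrable_of_mem_integrableExpSet (interior_subset ht))).ne'
  have hexp : HasDerivAt (fun s ↦ exp (s * X ω)) (exp (t * X ω) * X ω) t := by
    simpa using ((hasDerivAt_id t).mul_const (X ω)).exp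
  refine (hexp.div (hasDerivAt_mgf ht) hmgf).congr_deriv ?_
  rw [integral_tilted_mul_self ht, deriv_cgf ht]
  field_simp

end Tilted

end ProbabilityTheory

section QuadraticGrowth

open Real

variable {V : Type*} [NormedAddCommGroup V] [InnerProductSpace ℝ V] [FiniteDimensional ℝ V]
  [MeasurableSpace V] [BorelSpace V] {U : V → ℝ} {α R : ℝ}

lemma integrable_exp_neg_mul_sq_norm {c : ℝ} (hc : 0 < c) :
    Integrable (fun x : V ↦ exp (-c * ‖x‖ ^ 2)) := by
  refine (GaussianFourier.integrable_cexp_neg_mul_sq_norm_add (V := V) (b := c)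
    (by simpa using hc) 0 0).norm.congr (ae_of_all _ fun x ↦ ?_)
  simp [Complex.norm_exp, ← Complex.ofReal_pow]

lemma integrable_exp_mul_of_quadratic_growth (hU : AEStronglyMeasurable U) (hU0 : ∀ x, 0 ≤ U x)
    (hα : 0 < α) (htail : ∀ x, R < ‖x‖ → α * ‖x‖ ^ 2 ≤ U x) {t : ℝ} (ht : t < 0) :
    Integrable (fun x ↦ exp (t * U x)) := by
  have hball : Integrable ((Metric.closedBall (0 : V) R).indicator fun _ ↦ (1 : ℝ)) :=
    (integrableOn_const measure_closedBall_lt_top.ne).integrable_indicator measurableSet_closedBall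
  refine (hball.add (integrable_exp_neg_mul_sq_norm (mul_pos (neg_pos.2 ht) hα))).mono'
    (continuous_exp.comp_aestronglyMeasurable (hU.const_mul t)) (ae_of_all _ fun x ↦ ?_)
  rw [Pi.add_apply, norm_of_nonneg (exp_pos _).le]
  by_cases hx : x ∈ Metric.closedBall (0 : V) R
  · rw [Set.indicator_of_mem hx]
    have : exp (t * U x) ≤ 1 := exp_le_one_iff.2 (mul_nonpos_of_nonpos_of_nonneg ht.le (hU0 x))
    linarith [exp_pos (-(-t * α) * ‖x‖ ^ 2)]
  · rw [Set.indicator_of_notMem hx, zero_add, exp_le_exp]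
    nlinarith [htail x (by simpa using hx)]

lemma Iio_subset_interior_integrableExpSet_of_quadratic_growth (hU : AEStronglyMeasurable U)
    (hU0 : ∀ x, 0 ≤ U x) (hα : 0 < α) (htail : ∀ x, R < ‖x‖ → α * ‖x‖ ^ 2 ≤ U x) :
    Set.Iio 0 ⊆ interior (integrableExpSet U volume) :=
  interior_maximal (fun _ ht ↦ integrable_exp_mul_of_quadratic_growth hU hU0 hα htail ht)
    isOpen_Iio

end QuadraticGrowth

theorem gibbs_density_derivative_covariance_general (d : ℕ)
    (U : EuclideanSpace ℝ (Fin d) → ℝ)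
    (hU : Continuous U) (hU0 : ∀ x, 0 ≤ U x)
    (α R : ℝ) (hα : 0 < α)
    (htail : ∀ x, R < ‖x‖ → α * ‖x‖ ^ 2 ≤ U x)
    (β : ℝ → ℝ) (hβdiff : Differentiable ℝ β) (hβ1 : ∀ t, 1 ≤ β t)
    (π : ℝ → EuclideanSpace ℝ (Fin d) → ℝ)
    (hπ : ∀ t x, π t x = Real.exp (-(β t) * U x) / ∫ y, Real.exp (-(β t) * U y))
    (μ : ℝ → Measure (EuclideanSpace ℝ (Fin d)))
    (hμ : ∀ t, μ t = volume.withDensity fun x => ENNReal.ofReal (π t x))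
    (f : EuclideanSpace ℝ (Fin d) → ℝ)
    (hf : Measurable f) (hfb : ∃ C, ∀ x, |f x| ≤ C)
    (t : ℝ) :
    ∫ x, f x * deriv (fun s => π s x) t
      = -(deriv β t) *
        ∫ x, (f x - ∫ y, f y ∂(μ t)) * (U x - ∫ y, U y ∂(μ t)) ∂(μ t) := by
  obtain ⟨C, hC⟩ := hfb
  have hβt : -(β t) ∈ interior (integrableExpSet U volume) :=
    Iio_subset_interior_integrableExpSet_of_quadratic_growth hU.aestronglyMeasurable hU0 hα htail
      (by linarith [hβ1 t] : -(β t) < 0)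
  have hπ_mgf : π = fun s x ↦ Real.exp (-(β s) * U x) / mgf U volume (-(β s)) := funext₂ hπ
  have hμ_tilted : μ t = volume.tilted (-(β t) * U ·) := by
    rw [hμ, hπ_mgf]
    rfl
  have : IsProbabilityMeasure (μ t) := hμ_tilted ▸
    isProbabilityMeasure_tilted (integrable_of_mem_integrableExpSet (interior_subset hβt))
  have hderiv : ∀ x, deriv (fun s ↦ π s x) t = -deriv β t * ((U x - (μ t)[U]) * π t x) := by
    intro x
    rw [hπ_mgf, hμ_tilted, mul_comm]
    exact ((hasDerivAt_exp_mul_div_mgf hβt x).comp t (hβdiff t).hasDerivAt.neg).deriv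
  have hU_int : Integrable U (μ t) := hμ_tilted ▸ (memLp_tilted_mul hβt 1).integrable le_rfl
  have hfU_int : Integrable (fun x ↦ f x * (U x - (μ t)[U])) (μ t) :=
    (hU_int.sub (integrable_const _)).bdd_mul hf.aestronglyMeasurable (ae_of_all _ hC)
  change _ = -deriv β t * cov[f, U; μ t]
  rw [covariance_eq_integral_mul_sub hU_int hfU_int, ← integral_const_mul]
  set meanU := (μ t)[U]
  rw [hμ_tilted, integral_tilted]
  congr 1 with x
  rw [hderiv, hπ, smul_eq_mul]
  ring

theorem gibbs_density_derivative_covariance (d : ℕ)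
    (U : EuclideanSpace ℝ (Fin d) → ℝ)
    (hU : Continuous U) (hU0 : ∀ x, 0 ≤ U x) (hUinf : ⨅ x, U x = 0)
    (α R : ℝ) (hα : 0 < α) (hR : 0 < R)
    (htail : ∀ x, R < ‖x‖ → α * ‖x‖ ^ 2 ≤ U x)
    (β : ℝ → ℝ) (hβdiff : Differentiable ℝ β) (hβ1 : ∀ t, 1 ≤ β t)
    (π : ℝ → EuclideanSpace ℝ (Fin d) → ℝ)
    (hπ : ∀ t x, π t x = Real.exp (-(β t) * U x) / ∫ y, Real.exp (-(β t) * U y))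
    (μ : ℝ → Measure (EuclideanSpace ℝ (Fin d)))
    (hμ : ∀ t, μ t = volume.withDensity fun x => ENNReal.ofReal (π t x))
    (f : EuclideanSpace ℝ (Fin d) → ℝ)
    (hf : Measurable f) (hfb : ∃ C, ∀ x, |f x| ≤ C)
    (t : ℝ) :
    ∫ x, f x * deriv (fun s => π s x) t
      = -(deriv β t) *
        ∫ x, (f x - ∫ y, f y ∂(μ t)) * (U x - ∫ y, U y ∂(μ t)) ∂(μ t) :=
  gibbs_density_derivative_covariance_general d U hU hU0 α R hα htail β hβdiff hβ1 π hπ μ hμ f hf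
    hfb t
end

section
/- For the Gaussian Gibbs curve μ_t = N(0, β(t)⁻¹Σ) with Σ positive definite and β : [0,T] → [1,∞) differentiable non-decreasing with β(0) ≥ 1, the curve length ∫₀^T |μ'|(t) dt equals ‖Σ^{1/2}‖_Fr·(β(0)^{−1/2} − β(T)^{−1/2}), which is finite even if β(T) = +∞ or T = +∞. -/
open Set intervalIntegral

open scoped ComplexOrder in
/-- The positive semidefinite square root of a positive semidefinite matrix
(the definition Mathlib had in December 2024, since removed). -/
noncomputable def Matrix.PosSemidef.sqrt {n 𝕜 : Type*} [Fintype n] [DecidableEq n] [RCLike 𝕜]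
    {A : Matrix n n 𝕜} (hA : A.PosSemidef) : Matrix n n 𝕜 :=
  hA.1.eigenvectorUnitary.1 * Matrix.diagonal ((↑) ∘ (√·) ∘ hA.1.eigenvalues) *
  (star hA.1.eigenvectorUnitary : Matrix n n 𝕜)

noncomputable def frobSq {d : ℕ} (A : Matrix (Fin d) (Fin d) ℝ) : ℝ :=
  ∑ i, ∑ j, (A i j) ^ 2

theorem integral_deriv_mul_rpow {f f' : ℝ → ℝ} {a b p : ℝ} (hp : p ≠ -1)
    (hf : ∀ t ∈ uIcc a b, HasDerivAt f (f' t) t) (hf' : ContinuousOn f' (uIcc a b))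
    (hpos : ∀ t ∈ uIcc a b, 0 < f t) :
    ∫ t in a..b, f' t * f t ^ p = (f b ^ (p + 1) - f a ^ (p + 1)) / (p + 1) := by
  have hp1 : p + 1 ≠ 0 := fun h => hp (by linarith)
  have hprim : ∀ t ∈ uIcc a b,
      HasDerivAt (fun t => f t ^ (p + 1) / (p + 1)) (f' t * f t ^ p) t := by
    intro t ht
    refine (((hf t ht).rpow_const (p := p + 1) (Or.inl (hpos t ht).ne')).div_const
      (p + 1)).congr_deriv ?_
    rw [add_sub_cancel_right]
    field_simp
  have hfcont : ContinuousOn f (uIcc a b) := fun t ht => (hf t ht).continuousAt.continuousWithinAt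
  have hint : IntervalIntegrable (fun t => f' t * f t ^ p) MeasureTheory.volume a b :=
    (hf'.mul (hfcont.rpow_const fun t ht => Or.inl (hpos t ht).ne')).intervalIntegrable
  rw [integral_eq_sub_of_hasDerivAt hprim hint, sub_div]

theorem gaussian_gibbs_curve_length_general (d : ℕ)
    (S : Matrix (Fin d) (Fin d) ℝ) (hS : S.PosDef)
    (T : ℝ)
    (β β' : ℝ → ℝ) (hderiv : ∀ t, HasDerivAt β (β' t) t)
    (hcont : Continuous β') (hβ1 : ∀ t, 1 ≤ β t) :
    ∫ t in (0 : ℝ)..T,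
        Real.sqrt (frobSq hS.posSemidef.sqrt) / 2 * β' t * (β t) ^ (-(3 : ℝ) / 2)
      = Real.sqrt (frobSq hS.posSemidef.sqrt) *
        ((β 0) ^ (-(1 : ℝ) / 2) - (β T) ^ (-(1 : ℝ) / 2)) := by
  have hlength := integral_deriv_mul_rpow (f := β) (a := 0) (b := T) (p := -(3 : ℝ) / 2)
    (by norm_num) (fun t _ => hderiv t) hcont.continuousOn
    (fun t _ => zero_lt_one.trans_le (hβ1 t))
  rw [show -(3 : ℝ) / 2 + 1 = -(1 : ℝ) / 2 by norm_num] at hlength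
  simp_rw [mul_assoc, integral_const_mul, hlength]
  ring

theorem gaussian_gibbs_curve_length (d : ℕ)
    (S : Matrix (Fin d) (Fin d) ℝ) (hS : S.PosDef)
    (T : ℝ) (hT : 0 < T)
    (β β' : ℝ → ℝ) (hderiv : ∀ t, HasDerivAt β (β' t) t)
    (hcont : Continuous β') (hmono : Monotone β) (hβ1 : ∀ t, 1 ≤ β t) :
    ∫ t in (0 : ℝ)..T,
        Real.sqrt (frobSq hS.posSemidef.sqrt) / 2 * β' t * (β t) ^ (-(3 : ℝ) / 2)
      = Real.sqrt (frobSq hS.posSemidef.sqrt) *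
        ((β 0) ^ (-(1 : ℝ) / 2) - (β T) ^ (-(1 : ℝ) / 2)) :=
  gaussian_gibbs_curve_length_general d S hS T β β' hderiv hcont hβ1
end

section
/- Tail control of the one-dimensional flux: let U : ℝ → ℝ be C¹, inf U = 0, with quadratic tail growth, and suppose there exist α, R > 0 such that for |x| > R, x·(β₀ U'(x) − U'(x)/U(x)) ≥ α|x| (with β₀ ≥ 1 a fixed inverse temperature). Then for β ≥ β₀ and π_β(x) = Z_β⁻¹ e^{−βU(x)}: if x < −R then ∫_{−∞}^x U(z)π_β(z) dz ≤ α⁻¹ U(x) π_β(x), and if x > R then ∫_x^∞ U(z)π_β(z) dz ≤ α⁻¹ U(x) π_β(x). -/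
/-!
On the right tail the weight `F = U e^{-βU}` satisfies `F' = U' (1 - βU) e^{-βU}`. The hypothesis
says `α ≤ U' (β₀ - 1/U)` there, so `U` never crosses `1/β₀` on `(R, ∞)`; since `U → ∞` it stays
above `1/β₀`, hence `U' > 0` and `F' ≤ -α F` for every `β ≥ β₀`. Integrating this differential
inequality gives `α ∫_x^∞ F ≤ F x`. The left tail is the right tail of `z ↦ U (-z)`.
-/

open MeasureTheory Set Filter Real

theorem IsPreconnected.forall_lt_of_forall_ne {X α : Type*} [TopologicalSpace X]
    [LinearOrder α] [TopologicalSpace α] [OrderClosedTopology α] {s : Set X}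
    (hs : IsPreconnected s) {f : X → α} (hf : ContinuousOn f s) {t : α}
    (hne : ∀ x ∈ s, f x ≠ t) {a : X} (ha : a ∈ s) (hta : t < f a) : ∀ x ∈ s, t < f x := by
  intro x hx
  by_contra! hxt
  obtain ⟨y, hy, hyt⟩ := hs.intermediate_value hx ha hf ⟨hxt, hta.le⟩
  exact hne y hy hyt

theorem integral_Ioi_le_of_hasDerivAt_le_neg_mul {F F' : ℝ → ℝ} {a α : ℝ} (hα : 0 < α)
    (hF : ContinuousOn F (Ici a)) (hF' : ∀ x ∈ Ioi a, HasDerivAt F (F' x) x)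
    (hle : ∀ x ∈ Ioi a, F' x ≤ -(α * F x)) (hnn : ∀ x ∈ Ici a, 0 ≤ F x) :
    ∫ x in Ioi a, F x ≤ α⁻¹ * F a := by
  have hint : ∀ b, IntegrableOn F (Icc a b) := fun b =>
    (hF.mono Icc_subset_Ici_self).integrableOn_Icc
  have hpartial : ∀ b, a ≤ b → ∫ x in a..b, F x ≤ α⁻¹ * F a := by
    intro b hab
    have hFTC := intervalIntegral.sub_le_integral_of_hasDeriv_right_of_le (φ := fun x => -(α * F x))
      hab (hF.mono Icc_subset_Ici_self) (fun x hx => (hF' x hx.1).hasDerivWithinAt)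
      ((hint b).const_mul α).neg (fun x hx => hle x hx.1)
    rw [intervalIntegral.integral_neg, intervalIntegral.integral_const_mul] at hFTC
    rw [le_inv_mul_iff₀ hα]
    linarith [hnn b hab]
  have hnorm : ∀ b, a ≤ b → ∫ x in a..b, ‖F x‖ = ∫ x in a..b, F x := fun b hab =>
    intervalIntegral.integral_congr fun x hx =>
      norm_of_nonneg (hnn x (by rw [uIcc_of_le hab] at hx; exact hx.1))
  have hIoi : IntegrableOn F (Ioi a) :=
    integrableOn_Ioi_of_intervalIntegral_norm_bounded (α⁻¹ * F a) a
      (fun b => (hint b).mono_set Ioc_subset_Icc_self) tendsto_id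
      ((eventually_ge_atTop a).mono fun b hab => (hnorm b hab).trans_le (hpartial b hab))
  exact le_of_tendsto (intervalIntegral_tendsto_integral_Ioi a hIoi tendsto_id)
    ((eventually_ge_atTop a).mono hpartial)

theorem hasDerivAt_mul_exp_neg_mul {U : ℝ → ℝ} {U' x : ℝ} (β : ℝ) (h : HasDerivAt U U' x) :
    HasDerivAt (fun z => U z * exp (-β * U z)) (U' * (1 - β * U x) * exp (-β * U x)) x :=
  (h.mul (h.const_mul (-β)).exp).congr_deriv (by ring)

theorem mul_one_sub_mul_le_neg_mul {u d α β₀ β : ℝ} (hα : 0 ≤ α) (hu : 0 < u)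
    (hβ₀u : 1 < β₀ * u) (hβ : β₀ ≤ β) (h : α ≤ β₀ * d - d / u) :
    d * (1 - β * u) ≤ -(α * u) := by
  have hmul : α * u ≤ d * (β₀ * u - 1) :=
    calc α * u ≤ (β₀ * d - d / u) * u := mul_le_mul_of_nonneg_right h hu.le
      _ = d * (β₀ * u - 1) := by field_simp
  have hd : 0 ≤ d := by nlinarith
  nlinarith [mul_nonneg (mul_nonneg hd (sub_nonneg.2 hβ)) hu.le]

theorem one_lt_mul_of_le_mul_sub_div {U : ℝ → ℝ} {R α β₀ : ℝ} (hU : ContinuousOn U (Ioi R))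
    (hlim : Tendsto U atTop atTop) (hα : 0 < α) (hβ₀ : 0 < β₀)
    (hcond : ∀ x > R, α ≤ β₀ * deriv U x - deriv U x / U x) : ∀ x > R, 1 < β₀ * U x := by
  have hne : ∀ x ∈ Ioi R, β₀ * U x ≠ 1 := by
    intro x hx hx1
    have hinv : 1 / U x = β₀ := by rw [← hx1]; field_simp [right_ne_zero_of_mul_eq_one hx1]
    have := hcond x hx
    rw [div_eq_mul_one_div (deriv U x), hinv, mul_comm, sub_self] at this
    linarith
  obtain ⟨a, ha1, haR⟩ :=
    (((hlim.const_mul_atTop hβ₀).eventually_gt_atTop 1).and (eventually_gt_atTop R)).exists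
  exact isPreconnected_Ioi.forall_lt_of_forall_ne (hU.const_smul β₀) hne haR ha1

theorem integral_Ioi_mul_exp_neg_mul_le {U : ℝ → ℝ} {R α β₀ β x : ℝ}
    (hU : DifferentiableOn ℝ U (Ioi R)) (hlim : Tendsto U atTop atTop) (hα : 0 < α)
    (hβ₀ : 0 < β₀) (hβ : β₀ ≤ β) (hcond : ∀ x > R, α ≤ β₀ * deriv U x - deriv U x / U x)
    (hx : R < x) :
    ∫ z in Ioi x, U z * exp (-β * U z) ≤ α⁻¹ * (U x * exp (-β * U x)) := by
  have hlarge := one_lt_mul_of_le_mul_sub_div hU.continuousOn hlim hα hβ₀ hcond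
  have hpos : ∀ z > R, 0 < U z := fun z hz =>
    pos_of_mul_pos_right (one_pos.trans (hlarge z hz)) hβ₀.le
  have hUx : ContinuousOn U (Ici x) := hU.continuousOn.mono (Ici_subset_Ioi.2 hx)
  refine integral_Ioi_le_of_hasDerivAt_le_neg_mul hα (by fun_prop)
    (fun z hz => hasDerivAt_mul_exp_neg_mul β
      ((hU.differentiableAt (Ioi_mem_nhds (hx.trans hz))).hasDerivAt)) (fun z hz => ?_)
    (fun z hz => mul_nonneg (hpos z (hx.trans_le hz)).le (exp_pos _).le)
  have hzR : R < z := hx.trans hz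
  calc deriv U z * (1 - β * U z) * exp (-β * U z) ≤ -(α * U z) * exp (-β * U z) :=
        mul_le_mul_of_nonneg_right
          (mul_one_sub_mul_le_neg_mul hα.le (hpos z hzR) (hlarge z hzR) hβ (hcond z hzR))
          (exp_pos _).le
    _ = -(α * (U z * exp (-β * U z))) := by ring

theorem tendsto_atTop_of_mul_sq_le {U : ℝ → ℝ} {c R : ℝ} (hc : 0 < c)
    (h : ∀ x, R < |x| → c * x ^ 2 ≤ U x) : Tendsto U atTop atTop :=
  tendsto_atTop_mono' atTop
    ((eventually_gt_atTop R).mono fun x hx => h x (hx.trans_le (le_abs_self x)))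
    ((tendsto_pow_atTop two_ne_zero).const_mul_atTop hc)

theorem integral_Ioi_mul_exp_neg_mul_le_of_abs_lt {U : ℝ → ℝ} {c R α β₀ β x : ℝ}
    (hU : Differentiable ℝ U) (hc : 0 < c) (hR : 0 ≤ R) (hα : 0 < α) (hβ₀ : 0 < β₀)
    (hβ : β₀ ≤ β) (htail : ∀ x, R < |x| → c * x ^ 2 ≤ U x)
    (hcond : ∀ x, R < |x| → α * |x| ≤ x * (β₀ * deriv U x - deriv U x / U x)) (hx : R < x) :
    ∫ z in Ioi x, U z * exp (-β * U z) ≤ α⁻¹ * (U x * exp (-β * U x)) := by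
  refine integral_Ioi_mul_exp_neg_mul_le hU.differentiableOn (tendsto_atTop_of_mul_sq_le hc htail)
    hα hβ₀ hβ (fun z hz => ?_) hx
  have hz0 : 0 < z := hR.trans_lt hz
  have := hcond z (by rwa [abs_of_pos hz0])
  rw [abs_of_pos hz0, mul_comm] at this
  exact le_of_mul_le_mul_left this hz0

theorem one_dim_flux_tail_control_general
    (U : ℝ → ℝ) (hU : ContDiff ℝ 1 U)
    (c R α β₀ : ℝ) (hc : 0 < c) (hR : 0 < R) (hα : 0 < α) (hβ₀ : 1 ≤ β₀)
    (htail : ∀ x, R < |x| → c * x ^ 2 ≤ U x)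
    (hcond : ∀ x, R < |x| → α * |x| ≤ x * (β₀ * deriv U x - deriv U x / U x))
    (β : ℝ) (hβ : β₀ ≤ β)
    (Z : ℝ) (hZ : Z = ∫ y, Real.exp (-β * U y)) :
    (∀ x, x < -R →
      ∫ z in Set.Iic x, U z * (Real.exp (-β * U z) / Z)
        ≤ α⁻¹ * (U x * (Real.exp (-β * U x) / Z))) ∧
    (∀ x, R < x →
      ∫ z in Set.Ici x, U z * (Real.exp (-β * U z) / Z)
        ≤ α⁻¹ * (U x * (Real.exp (-β * U x) / Z))) := by
  have hUd : Differentiable ℝ U := hU.differentiable one_ne_zero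
  have hβ₀' : 0 < β₀ := by linarith
  have normalize : ∀ (s : Set ℝ) (x : ℝ),
      ∫ z in s, U z * exp (-β * U z) ≤ α⁻¹ * (U x * exp (-β * U x)) →
      ∫ z in s, U z * (exp (-β * U z) / Z) ≤ α⁻¹ * (U x * (exp (-β * U x) / Z)) := by
    intro s x h
    simp_rw [← mul_div_assoc, integral_div]
    exact div_le_div_of_nonneg_right h (hZ ▸ integral_nonneg fun _ => (exp_pos _).le)
  refine ⟨fun x hx => normalize _ x ?_, fun x hx => normalize _ x ?_⟩
  · have hreflect := integral_Ioi_mul_exp_neg_mul_le_of_abs_lt (U := fun z => U (-z)) (β := β)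
      (hUd.comp differentiable_neg) hc hR.le hα hβ₀' hβ
      (fun z hz => by simpa using htail (-z) (by rwa [abs_neg]))
      (fun z hz => by
        have := hcond (-z) (by rwa [abs_neg])
        rw [abs_neg] at this
        rw [deriv_comp_neg]
        convert this using 1
        ring)
      (lt_neg_of_lt_neg hx)
    have hcomp := integral_comp_neg_Iic x (fun z => U (-z) * exp (-β * U (-z)))
    simp only [neg_neg] at hcomp hreflect
    rwa [hcomp]
  · rw [integral_Ici_eq_integral_Ioi]
    exact integral_Ioi_mul_exp_neg_mul_le_of_abs_lt hUd hc hR.le hα hβ₀' hβ htail hcond hx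

theorem one_dim_flux_tail_control
    (U : ℝ → ℝ) (hU : ContDiff ℝ 1 U) (hU0 : ∀ x, 0 ≤ U x) (hUinf : ⨅ x, U x = 0)
    (c R α β₀ : ℝ) (hc : 0 < c) (hR : 0 < R) (hα : 0 < α) (hβ₀ : 1 ≤ β₀)
    (htail : ∀ x, R < |x| → c * x ^ 2 ≤ U x)
    (hcond : ∀ x, R < |x| → α * |x| ≤ x * (β₀ * deriv U x - deriv U x / U x))
    (β : ℝ) (hβ : β₀ ≤ β)
    (Z : ℝ) (hZ : Z = ∫ y, Real.exp (-β * U y)) :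
    (∀ x, x < -R →
      ∫ z in Set.Iic x, U z * (Real.exp (-β * U z) / Z)
        ≤ α⁻¹ * (U x * (Real.exp (-β * U x) / Z))) ∧
    (∀ x, R < x →
      ∫ z in Set.Ici x, U z * (Real.exp (-β * U z) / Z)
        ≤ α⁻¹ * (U x * (Real.exp (-β * U x) / Z))) :=
  one_dim_flux_tail_control_general U hU c R α β₀ hc hR hα hβ₀ htail hcond β hβ Z hZ
end

section
/- Jump generator solves the Fokker–Planck equation for the Gibbs curve: let X ⊂ ℝ^d be compact, U continuous on X, β differentiable with β' ≥ 0, Û = U − min_X U, π_t ∝ exp(−β(t)U) the Gibbs density on X, and Q_t f(x) = β'(t)Û(x)·∫(f(y) − f(x))π_t(y)dy. Then for every bounded measurable f, ∫ Q_t f(x) π_t(x) dx = −β'(t)·Cov_{μ_t}(f, U) = ∫ f(x) ∂_t π_t(x) dx. -/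
/-! Once `π t` is a probability density on `K`, the inner integral in `Q t x` is
`E f - f x`, so `∫ Q t π t = β' ∫ Û (E f - f) π t`. Since `E f - f` has mean zero,
the constant in `Û = U - min U` drops out and what is left is `-β' Cov(f, U)`;
expanding `U - E U` in the Fokker–Planck side gives the same covariance. -/

open MeasureTheory

section JumpGenerator

variable {α : Type*} [MeasurableSpace α] {μ : Measure α} {f U g : α → ℝ}

theorem integral_sub_const_mul_density (hg : Integrable g μ) (hg_one : ∫ x, g x ∂μ = 1)
    (hfg : Integrable (fun x => f x * g x) μ) (c : ℝ) :
    ∫ y, (f y - c) * g y ∂μ = (∫ y, f y * g y ∂μ) - c := by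
  simp_rw [sub_mul]
  rw [integral_sub hfg (hg.const_mul c), integral_const_mul, hg_one, mul_one]

theorem integral_jump_generator_mul_density (hg : Integrable g μ) (hg_one : ∫ x, g x ∂μ = 1)
    (hfg : Integrable (fun x => f x * g x) μ) (hUg : Integrable (fun x => U x * g x) μ)
    (hfUg : Integrable (fun x => f x * U x * g x) μ) (b m : ℝ) :
    ∫ x, b * (U x - m) * (∫ y, (f y - f x) * g y ∂μ) * g x ∂μ
      = -b * ((∫ x, f x * U x * g x ∂μ) - (∫ x, f x * g x ∂μ) * ∫ x, U x * g x ∂μ) := by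
  set If := ∫ y, f y * g y ∂μ
  have hexpand : ∀ x, b * (U x - m) * (∫ y, (f y - f x) * g y ∂μ) * g x
      = (b * If) * (U x * g x) - b * (f x * U x * g x) - (b * m * If) * g x
        + (b * m) * (f x * g x) := fun x => by
    rw [integral_sub_const_mul_density hg hg_one hfg]; ring
  simp_rw [hexpand]
  have hUfU := (hUg.const_mul (b * If)).sub (hfUg.const_mul b)
  rw [integral_add ?_ (hfg.const_mul _), integral_sub ?_ (hg.const_mul _),
    integral_sub (hUg.const_mul _) (hfUg.const_mul _)]
  · simp only [integral_const_mul, hg_one]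
    ring
  · exact hUfU
  · exact hUfU.sub (hg.const_mul _)

theorem integral_mul_centered_density (hfg : Integrable (fun x => f x * g x) μ)
    (hfUg : Integrable (fun x => f x * U x * g x) μ) (b : ℝ) :
    ∫ x, f x * (-b * (U x - ∫ y, U y * g y ∂μ) * g x) ∂μ
      = -b * ((∫ x, f x * U x * g x ∂μ) - (∫ x, f x * g x ∂μ) * ∫ x, U x * g x ∂μ) := by
  set IU := ∫ y, U y * g y ∂μ
  have hexpand : ∀ x, f x * (-b * (U x - IU) * g x)
      = (b * IU) * (f x * g x) - b * (f x * U x * g x) := fun x => by ring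
  simp_rw [hexpand]
  rw [integral_sub (hfg.const_mul _) (hfUg.const_mul _), integral_const_mul, integral_const_mul]
  ring

end JumpGenerator

theorem jump_generator_solves_fokker_planck_general (d : ℕ)
    (K : Set (EuclideanSpace ℝ (Fin d)))
    (hKcompact : IsCompact K)
    (U : EuclideanSpace ℝ (Fin d) → ℝ) (hU : ContinuousOn U K)
    (β : ℝ → ℝ)
    (π : ℝ → EuclideanSpace ℝ (Fin d) → ℝ)
    (hπ : ∀ t x, π t x = Real.exp (-(β t) * U x) / ∫ y in K, Real.exp (-(β t) * U y))
    (Uhat : EuclideanSpace ℝ (Fin d) → ℝ)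
    (hUhat : ∀ x, Uhat x = U x - sInf (U '' K))
    (f : EuclideanSpace ℝ (Fin d) → ℝ)
    (hf : Measurable f) (hfb : ∃ C, ∀ x, |f x| ≤ C)
    (Q : ℝ → EuclideanSpace ℝ (Fin d) → ℝ)
    (hQ : ∀ t x, Q t x = deriv β t * Uhat x * ∫ y in K, (f y - f x) * π t y)
    (t : ℝ) :
    (∫ x in K, Q t x * π t x)
        = -(deriv β t) * ((∫ x in K, f x * U x * π t x)
          - (∫ x in K, f x * π t x) * (∫ x in K, U x * π t x)) ∧
    (∫ x in K, Q t x * π t x)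
        = ∫ x in K, f x * (-(deriv β t) * (U x - ∫ y in K, U y * π t y) * π t x) := by
  have hπt : π t = fun x => Real.exp (-(β t) * U x) / ∫ y in K, Real.exp (-(β t) * U y) :=
    funext (hπ t)
  -- With a vanishing normalizer, `x / 0 = 0` makes `π t` identically zero.
  by_cases hZ : ∫ y in K, Real.exp (-(β t) * U y) = 0
  · have hπ_zero : π t = 0 := funext fun x => by rw [hπ, hZ, div_zero, Pi.zero_apply]
    simp [hπ_zero]
  have hπ_one : ∫ x in K, π t x = 1 := by rw [hπt, integral_div, div_self hZ]
  have hπ_cont : ContinuousOn (π t) K := by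
    rw [hπt]; fun_prop
  have hπ_int : IntegrableOn (π t) K := hπ_cont.integrableOn_compact hKcompact
  have hUπ_int : IntegrableOn (fun x => U x * π t x) K :=
    (hU.mul hπ_cont).integrableOn_compact hKcompact
  obtain ⟨C, hC⟩ := hfb
  have hf_bdd : ∀ᵐ x ∂volume.restrict K, ‖f x‖ ≤ C := ae_of_all _ hC
  have hfπ_int : IntegrableOn (fun x => f x * π t x) K :=
    hπ_int.bdd_mul hf.aestronglyMeasurable hf_bdd
  have hfUπ_int : IntegrableOn (fun x => f x * U x * π t x) K := by
    simpa only [IntegrableOn, mul_assoc] using hUπ_int.bdd_mul hf.aestronglyMeasurable hf_bdd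
  have hgenerator : ∫ x in K, Q t x * π t x
      = -(deriv β t) * ((∫ x in K, f x * U x * π t x)
          - (∫ x in K, f x * π t x) * (∫ x in K, U x * π t x)) := by
    simp only [hQ, hUhat]
    exact integral_jump_generator_mul_density hπ_int hπ_one hfπ_int hUπ_int hfUπ_int _ _
  exact ⟨hgenerator, hgenerator.trans
    (integral_mul_centered_density hfπ_int hfUπ_int (deriv β t)).symm⟩

theorem jump_generator_solves_fokker_planck (d : ℕ)
    (K : Set (EuclideanSpace ℝ (Fin d)))
    (hKcompact : IsCompact K) (hKmeas : MeasurableSet K) (hKpos : 0 < volume K)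
    (U : EuclideanSpace ℝ (Fin d) → ℝ) (hU : ContinuousOn U K)
    (β : ℝ → ℝ) (hβdiff : Differentiable ℝ β) (hβmono : ∀ t, 0 ≤ deriv β t)
    (π : ℝ → EuclideanSpace ℝ (Fin d) → ℝ)
    (hπ : ∀ t x, π t x = Real.exp (-(β t) * U x) / ∫ y in K, Real.exp (-(β t) * U y))
    (Uhat : EuclideanSpace ℝ (Fin d) → ℝ)
    (hUhat : ∀ x, Uhat x = U x - sInf (U '' K))
    (f : EuclideanSpace ℝ (Fin d) → ℝ)
    (hf : Measurable f) (hfb : ∃ C, ∀ x, |f x| ≤ C)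
    (Q : ℝ → EuclideanSpace ℝ (Fin d) → ℝ)
    (hQ : ∀ t x, Q t x = deriv β t * Uhat x * ∫ y in K, (f y - f x) * π t y)
    (t : ℝ) :
    (∫ x in K, Q t x * π t x)
        = -(deriv β t) * ((∫ x in K, f x * U x * π t x)
          - (∫ x in K, f x * π t x) * (∫ x in K, U x * π t x)) ∧
    (∫ x in K, Q t x * π t x)
        = ∫ x in K, f x * (-(deriv β t) * (U x - ∫ y in K, U y * π t y) * π t x) :=
  jump_generator_solves_fokker_planck_general d K hKcompact U hU β π hπ Uhat hUhat f hf hfb Q hQ t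
end
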